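/- arXiv:2008.09002 — 2 statements merged into one kernel-verified Lean document; each statement's English description precedes it below -/
import Mathlib

section
/- Let T be a tree with maximum degree at most 4 and no vertex of degree 2, let v be a vertex of T, and let C be a connected component of the forest T − v that contains at least two vertices. Then C contains a vertex that is a 2-fork or a 3-fork of T. -/
/-!
Let `x` be a vertex of `C` farthest from `v`. As `|C| ≥ 2`, `x` has a neighbour `y ∈ C`, one step
closer to `v`. Distances to `v` change by exactly one along edges of a tree and every vertex
other than `v` has a unique neighbour closer to `v`, so all neighbours of `y` but its parent are
as far from `v` as `x`. A farthest vertex of `C` is a leaf, as any neighbour but its parent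
would lie in `C` farther from `v`; so these neighbours are leaves. Having the parent and `x` as neighbours,
`y` has degree 3 or 4, so it is a 2-fork or a 3-fork.
-/

open SimpleGraph

namespace TurnRegular

/-- Degree of a vertex: the cardinality of its neighbor set. -/
noncomputable def deg {V : Type*} (G : SimpleGraph V) (v : V) : ℕ :=
  (G.neighborSet v).ncard

/-- A splitter: a vertex adjacent to at least three non-leaf vertices. -/
def IsSplitter {V : Type*} (G : SimpleGraph V) (v : V) : Prop :=
  3 ≤ {u | G.Adj v u ∧ 2 ≤ deg G u}.ncard

/-- A `k`-fork: a vertex of degree exactly `k+1` adjacent to at least `k` leaves. -/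
def IsKFork {V : Type*} (k : ℕ) (G : SimpleGraph V) (v : V) : Prop :=
  deg G v = k + 1 ∧ k ≤ {u | G.Adj v u ∧ deg G u = 1}.ncard

/-- A `k`-caterpillar: a tree with at least three vertices whose non-leaf vertices
form the vertex set of a path, every non-leaf vertex having degree between `3` and `k`. -/
def IsKCaterpillar (k : ℕ) {W : Type*} (G : SimpleGraph W) : Prop :=
  G.IsTree ∧ 3 ≤ Nat.card W ∧
  (∃ (a b : W) (p : G.Walk a b), p.IsPath ∧ ∀ v, 2 ≤ deg G v ↔ v ∈ p.support) ∧
  (∀ v, 2 ≤ deg G v → 3 ≤ deg G v ∧ deg G v ≤ k)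

/-- The vertex set of the connected component of `G - v` containing `u`
(for `u ≠ v`): all vertices reachable from `u` by a walk avoiding `v`. -/
def compAway {V : Type*} (G : SimpleGraph V) (v u : V) : Set V :=
  {w | ∃ p : G.Walk u w, v ∉ p.support}

/-- Vertex set of the branch of `G` at `v` through the component of `G - v`
containing `u`. -/
def branchVerts {V : Type*} (G : SimpleGraph V) (v u : V) : Set V :=
  insert v (compAway G v u)

/-- The branch of `G` at `v` through the component of `G - v` containing `u`:
the subgraph induced on `{v} ∪ C`. -/
def branch {V : Type*} (G : SimpleGraph V) (v u : V) :
    SimpleGraph (branchVerts G v u) :=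
  G.induce (branchVerts G v u)

/-- A 4-windmill: a tree of maximum degree at most 4 with exactly one splitter `v`,
such that `v` has degree 4 and each of the four branches at `v` is a 3-caterpillar. -/
def Is4Windmill {V : Type*} (G : SimpleGraph V) : Prop :=
  G.IsTree ∧ (∀ w, deg G w ≤ 4) ∧
  ∃ v, (∀ w, IsSplitter G w ↔ w = v) ∧ deg G v = 4 ∧
    ∀ u, G.Adj v u → IsKCaterpillar 3 (branch G v u)

/-- A 3-windmill: a tree of maximum degree at most 4 with exactly one splitter `v`,
such that `v` has exactly three non-leaf neighbors, every other neighbor of `v`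
is a leaf, and among the three branches at `v` through the components containing
the non-leaf neighbors, two are 3-caterpillars and one is a 4-caterpillar. -/
def Is3Windmill {V : Type*} (G : SimpleGraph V) : Prop :=
  G.IsTree ∧ (∀ w, deg G w ≤ 4) ∧
  ∃ v, (∀ w, IsSplitter G w ↔ w = v) ∧
    ∃ u₁ u₂ u₃, u₁ ≠ u₂ ∧ u₁ ≠ u₃ ∧ u₂ ≠ u₃ ∧
      G.Adj v u₁ ∧ G.Adj v u₂ ∧ G.Adj v u₃ ∧
      2 ≤ deg G u₁ ∧ 2 ≤ deg G u₂ ∧ 2 ≤ deg G u₃ ∧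
      (∀ u, G.Adj v u → 2 ≤ deg G u → u = u₁ ∨ u = u₂ ∨ u = u₃) ∧
      (∀ u, G.Adj v u → u ≠ u₁ → u ≠ u₂ → u ≠ u₃ → deg G u = 1) ∧
      IsKCaterpillar 3 (branch G v u₁) ∧ IsKCaterpillar 3 (branch G v u₂) ∧
      IsKCaterpillar 4 (branch G v u₃)

/-- A double-windmill: a tree of maximum degree at most 4 with exactly two
splitters `u` and `v` such that (i) every vertex strictly between `u` and `v`
on the `u`–`v` path is adjacent, apart from its neighbors on the path, only
to leaves; (ii) each of `u` and `v` has exactly three non-leaf neighbors and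
every other neighbor is a leaf; (iii) for each of `u` and `v`, the two branches
at it through the components that contain one of its non-leaf neighbors but not
the other splitter are 3-caterpillars. -/
def IsDoubleWindmill {V : Type*} (G : SimpleGraph V) : Prop :=
  G.IsTree ∧ (∀ w, deg G w ≤ 4) ∧
  ∃ u v, u ≠ v ∧ (∀ w, IsSplitter G w ↔ (w = u ∨ w = v)) ∧
    (∀ p : G.Walk u v, p.IsPath →
      ∀ w ∈ p.support, w ≠ u → w ≠ v →
        ∀ x, G.Adj w x → x ∉ p.support → deg G x = 1) ∧
    {x | G.Adj u x ∧ 2 ≤ deg G x}.ncard = 3 ∧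
    {x | G.Adj v x ∧ 2 ≤ deg G x}.ncard = 3 ∧
    (∀ x, G.Adj u x → deg G x = 1 ∨ 2 ≤ deg G x) ∧
    (∀ x, G.Adj v x → deg G x = 1 ∨ 2 ≤ deg G x) ∧
    (∀ x, G.Adj u x → 2 ≤ deg G x → v ∉ branchVerts G u x →
      IsKCaterpillar 3 (branch G u x)) ∧
    (∀ x, G.Adj v x → 2 ≤ deg G x → u ∉ branchVerts G v x →
      IsKCaterpillar 3 (branch G v x))

/-- The closed axis-parallel ray starting at `p` and passing through `q`
(extended to infinity beyond `q`). -/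
def ray (p q : ℝ × ℝ) : Set (ℝ × ℝ) :=
  {x | ∃ t : ℝ, 0 ≤ t ∧ x = p + t • (q - p)}

/-- A rectilinear planar drawing of `G`: an injective placement of the vertices
in the plane such that each edge is a horizontal or vertical segment, and the
segments of two distinct edges meet at most in the image of a common endpoint. -/
def IsRectDrawing {V : Type*} (G : SimpleGraph V) (Γ : V → ℝ × ℝ) : Prop :=
  Function.Injective Γ ∧
  (∀ u v, G.Adj u v → (Γ u).1 = (Γ v).1 ∨ (Γ u).2 = (Γ v).2) ∧
  (∀ u v x y, G.Adj u v → G.Adj x y → s(u, v) ≠ s(x, y) →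
    ∀ p ∈ segment ℝ (Γ u) (Γ v) ∩ segment ℝ (Γ x) (Γ y),
      ∃ w, (w = u ∨ w = v) ∧ (w = x ∨ w = y) ∧ p = Γ w)

/-- The drawn point set of edge `{a, b}` in the drawing `Γ`: its segment, where
the edge is extended beyond each leaf endpoint to an infinite axis-parallel ray. -/
noncomputable def edgeDrawn {V : Type*} (G : SimpleGraph V) (Γ : V → ℝ × ℝ)
    (a b : V) : Set (ℝ × ℝ) :=
  (if deg G b = 1 then ray (Γ a) (Γ b) else segment ℝ (Γ a) (Γ b)) ∪
  (if deg G a = 1 then ray (Γ b) (Γ a) else segment ℝ (Γ a) (Γ b))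

/-- A convex rectilinear planar drawing: a rectilinear planar drawing in which,
after extending every edge incident to a leaf beyond that leaf to an infinite
axis-parallel ray, the resulting point sets of two distinct edges still meet at
most in the image of a common endpoint. -/
def IsConvexRectDrawing {V : Type*} (G : SimpleGraph V) (Γ : V → ℝ × ℝ) : Prop :=
  IsRectDrawing G Γ ∧
  (∀ u v x y, G.Adj u v → G.Adj x y → s(u, v) ≠ s(x, y) →
    ∀ p ∈ edgeDrawn G Γ u v ∩ edgeDrawn G Γ x y,
      ∃ w, (w = u ∨ w = v) ∧ (w = x ∨ w = y) ∧ p = Γ w)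

/-- `G` admits a convex rectilinear planar drawing. -/
def HasConvexDrawing {V : Type*} (G : SimpleGraph V) : Prop :=
  ∃ Γ : V → ℝ × ℝ, IsConvexRectDrawing G Γ

end TurnRegular

namespace SimpleGraph

variable {V : Type*} {G : SimpleGraph V}

lemma dist_le_of_mem_support {u v w : V} {p : G.Walk u v} (hp : p.length = G.dist u v)
    (hw : w ∈ p.support) : G.dist u w ≤ G.dist u v := by
  classical
  calc G.dist u w ≤ (p.takeUntil w hw).length := dist_le _
    _ ≤ p.length := p.length_takeUntil_le_length hw
    _ = G.dist u v := hp

lemma Connected.exists_adj_dist_lt (hG : G.Connected) {v x : V} (hxv : x ≠ v) :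
    ∃ z, G.Adj x z ∧ G.dist v z < G.dist v x := by
  obtain ⟨p, -, hp⟩ := hG.exists_path_of_dist v x
  have hnil : ¬p.Nil := Walk.not_nil_of_ne hxv.symm
  refine ⟨p.penultimate, (p.adj_penultimate hnil).symm, ?_⟩
  have := p.length_dropLast_add_one hnil
  have := dist_le p.dropLast
  omega

lemma IsTree.eq_of_adj_of_dist_lt (hG : G.IsTree) {v x a b : V} (ha : G.Adj x a)
    (hb : G.Adj x b) (hav : G.dist v a < G.dist v x) (hbv : G.dist v b < G.dist v x) : a = b := by
  obtain ⟨p, hp⟩ := hG.connected.exists_isPath v x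
  suffices ∀ c, G.Adj x c → G.dist v c < G.dist v x → c = p.penultimate from
    (this a ha hav).trans (this b hb hbv).symm
  intro c hc hcv
  obtain ⟨q, hq, hql⟩ := hG.connected.exists_path_of_dist v c
  have hxq : x ∉ q.support := fun hx => (dist_le_of_mem_support hql hx).not_gt hcv
  exact hG.isAcyclic.eq_penultimate_of_adj_end hp hc
    (hG.isAcyclic.mem_support_of_ne_mem_support_of_adj_of_isPath hp hq hc hxq)

lemma IsTree.dist_eq_add_one_of_adj_of_ne (hG : G.IsTree) {v x z a : V} (hz : G.Adj x z)
    (hzv : G.dist v z < G.dist v x) (ha : G.Adj x a) (haz : a ≠ z) :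
    G.dist v a = G.dist v x + 1 :=
  (hG.dist_eq_dist_add_one_of_adj v ha).resolve_left fun h =>
    haz (hG.eq_of_adj_of_dist_lt ha hz (by omega) hzv)

end SimpleGraph

namespace TurnRegular

section Branch

variable {V : Type*} {G : SimpleGraph V}

lemma ne_of_mem_compAway {v u w : V} (hw : w ∈ compAway G v u) : w ≠ v := by
  obtain ⟨p, hp⟩ := hw
  rintro rfl
  exact hp p.end_mem_support

lemma mem_compAway_of_adj {v u w a : V} (hw : w ∈ compAway G v u) (hwa : G.Adj w a) (hav : a ≠ v) :
    a ∈ compAway G v u := by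
  obtain ⟨p, hp⟩ := hw
  refine ⟨p.concat hwa, ?_⟩
  rw [Walk.support_concat, List.mem_append, List.mem_singleton]
  exact fun h => h.elim hp hav.symm

lemma exists_adj_mem_compAway {v u x w : V} (hx : x ∈ compAway G v u)
    (hw : w ∈ compAway G v u) (hxw : x ≠ w) : ∃ y ∈ compAway G v u, G.Adj x y := by
  obtain ⟨p, hp⟩ := hx
  obtain ⟨q, hq⟩ := hw
  set r := p.reverse.append q
  have hr : v ∉ r.support := by
    simp only [r, Walk.mem_support_append_iff, Walk.support_reverse, List.mem_reverse]
    tauto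
  have hnil : ¬r.Nil := Walk.not_nil_of_ne hxw
  have hsnd : r.snd ≠ v := fun h => hr (h ▸ r.getVert_mem_support 1)
  exact ⟨r.snd, mem_compAway_of_adj ⟨p, hp⟩ (r.adj_snd hnil) hsnd, r.adj_snd hnil⟩

lemma deg_eq_one_of_forall_dist_le (hG : G.IsTree) {v u x : V}
    (hx : x ∈ compAway G v u) (hmax : ∀ w ∈ compAway G v u, G.dist v w ≤ G.dist v x) :
    deg G x = 1 := by
  obtain ⟨z, hz, hzv⟩ := hG.connected.exists_adj_dist_lt (ne_of_mem_compAway hx)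
  suffices G.neighborSet x = {z} by rw [deg, this, Set.ncard_singleton]
  ext a
  refine ⟨fun ha => ?_, fun ha => (Set.mem_singleton_iff.mp ha) ▸ hz⟩
  by_contra haz
  have hdist := hG.dist_eq_add_one_of_adj_of_ne hz hzv ha haz
  have hav : a ≠ v := by
    rintro rfl
    simp at hdist
  have := hmax a (mem_compAway_of_adj hx ha hav)
  omega

lemma two_le_deg_of_adj [Finite V] {x a b : V} (ha : G.Adj x a) (hb : G.Adj x b) (hab : a ≠ b) :
    2 ≤ deg G x :=
  calc 2 = ({a, b} : Set V).ncard := (Set.ncard_pair hab).symm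
    _ ≤ deg G x := Set.ncard_le_ncard (by rintro c (rfl | rfl) <;> assumption) (Set.toFinite _)

lemma isKFork_of_forall_adj_ne [Finite V] {k : ℕ} {x z : V} (hx : deg G x = k + 1)
    (hleaf : ∀ a, G.Adj x a → a ≠ z → deg G a = 1) : IsKFork k G x := by
  refine ⟨hx, ?_⟩
  calc k = deg G x - 1 := by omega
    _ ≤ (G.neighborSet x \ {z}).ncard := Set.pred_ncard_le_ncard_sdiff_singleton _ _
    _ ≤ {a | G.Adj x a ∧ deg G a = 1}.ncard :=
      Set.ncard_le_ncard (fun a ha => ⟨ha.1, hleaf a ha.1 ha.2⟩) (Set.toFinite _)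

end Branch

theorem stmt9_general {V : Type*} [Fintype V] (G : SimpleGraph V)
    (htree : G.IsTree) (hdeg : ∀ w, deg G w ≤ 4) (hno2 : ∀ w, deg G w ≠ 2)
    (v u : V) (hbig : 2 ≤ (compAway G v u).ncard) :
    ∃ w ∈ compAway G v u, IsKFork 2 G w ∨ IsKFork 3 G w := by
  set C := compAway G v u
  obtain ⟨x, hxC, hxmax⟩ := Set.exists_max_image C (G.dist v) C.toFinite
    (Set.nonempty_of_ncard_ne_zero (by omega))
  obtain ⟨w, hwC, hwx⟩ := Set.exists_ne_of_one_lt_ncard hbig x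
  obtain ⟨y, hyC, hxy⟩ := exists_adj_mem_compAway hxC hwC hwx.symm
  have hyx : G.dist v x = G.dist v y + 1 :=
    (htree.dist_eq_dist_add_one_of_adj v hxy).resolve_right fun h => by
      have := hxmax y hyC
      omega
  obtain ⟨z, hyz, hzy⟩ := htree.connected.exists_adj_dist_lt (ne_of_mem_compAway hyC)
  have hleaf : ∀ a, G.Adj y a → a ≠ z → deg G a = 1 := fun a hya haz => by
    have hdist := htree.dist_eq_add_one_of_adj_of_ne hyz hzy hya haz
    have hav : a ≠ v := by
      rintro rfl
      simp at hdist
    exact deg_eq_one_of_forall_dist_le htree (mem_compAway_of_adj hyC hya hav)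
      (fun w hw => hdist ▸ hyx ▸ hxmax w hw)
  have hy2 : 2 ≤ deg G y := two_le_deg_of_adj hxy.symm hyz (by rintro rfl; omega)
  refine ⟨y, hyC, ?_⟩
  rcases (by have := hdeg y; have := hno2 y; omega : deg G y = 2 + 1 ∨ deg G y = 3 + 1) with h | h
  · exact .inl (isKFork_of_forall_adj_ne h hleaf)
  · exact .inr (isKFork_of_forall_adj_ne h hleaf)

/-- Let `T` be a tree with maximum degree at most 4 and no vertex of degree 2,
let `v` be a vertex of `T`, and let `C` be a connected component of `T - v`
(here: the component containing a vertex `u ≠ v`) that contains at least two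
vertices. Then `C` contains a vertex that is a 2-fork or a 3-fork of `T`. -/
theorem stmt9 {V : Type*} [Fintype V] (G : SimpleGraph V)
    (htree : G.IsTree) (hdeg : ∀ w, deg G w ≤ 4) (hno2 : ∀ w, deg G w ≠ 2)
    (v u : V) (huv : u ≠ v) (hbig : 2 ≤ (compAway G v u).ncard) :
    ∃ w ∈ compAway G v u, IsKFork 2 G w ∨ IsKFork 3 G w :=
  stmt9_general G htree hdeg hno2 v u hbig

end TurnRegular
end

section
/- If a tree T contains at least three distinct splitters, then T contains three distinct splitters x, y, z such that y lies on the (unique) path from x to z in T. -/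
open SimpleGraph

/-!
Take three splitters `a`, `b`, `c` and their median `m`: the vertex at which the paths from `m`
to `a`, `b`, `c` pairwise meet only in `m`. If `m` is one of the three, it lies on the path
between the other two. Otherwise the neighbours of `m` on these paths are three distinct
non-leaves, so `m` is a further splitter, lying on the path from `a` to `b`.
-/

namespace SimpleGraph

variable {V : Type*} {G : SimpleGraph V}

namespace Walk

lemma exists_eq_append_first_mem {S : Set V} {u v : V} (q : G.Walk u v) (hv : v ∈ S) :
    ∃ m ∈ S, ∃ (r : G.Walk u m) (r' : G.Walk m v), q = r.append r' ∧
      ∀ x ∈ r.support, x ∈ S → x = m := by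
  induction q with
  | nil => exact ⟨_, hv, nil, nil, rfl, by simp⟩
  | @cons u w v h t ih =>
    by_cases hu : u ∈ S
    · exact ⟨u, hu, nil, cons h t, rfl, by simp⟩
    obtain ⟨m, hm, r, r', rfl, hr⟩ := ih hv
    refine ⟨m, hm, cons h r, r', rfl, fun x hx hxS => ?_⟩
    rw [support_cons, List.mem_cons] at hx
    rcases hx with rfl | hx
    · exact absurd hxS hu
    · exact hr x hx hxS

lemma IsPath.reverse_append {m a b : V} {pa : G.Walk m a} {pb : G.Walk m b}
    (ha : pa.IsPath) (hb : pb.IsPath) (hab : ∀ x ∈ pa.support, x ∈ pb.support → x = m) :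
    (pa.reverse.append pb).IsPath := by
  rw [isPath_def, support_append, support_reverse]
  refine (List.nodup_reverse.mpr ha.support_nodup).append hb.support_nodup.tail fun x hxa hxb => ?_
  have hm : m ∉ pb.support.tail := by
    have := hb.support_nodup
    rw [← pb.cons_tail_support] at this
    exact (List.nodup_cons.mp this).1
  exact hm (hab x (List.mem_reverse.mp hxa) (List.mem_of_mem_tail hxb) ▸ hxb)

end Walk

lemma Connected.exists_tripod (hG : G.Connected) (a b c : V) :
    ∃ (m : V) (pa : G.Walk m a) (pb : G.Walk m b) (pc : G.Walk m c),
      pa.IsPath ∧ pb.IsPath ∧ pc.IsPath ∧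
      (∀ x ∈ pa.support, x ∈ pb.support → x = m) ∧
      (∀ x ∈ pa.support, x ∈ pc.support → x = m) ∧
      (∀ x ∈ pb.support, x ∈ pc.support → x = m) := by
  obtain ⟨p, hp⟩ := (hG a b).exists_isPath
  obtain ⟨q, hq⟩ := (hG c a).exists_isPath
  -- `m` is the first vertex of the path from `c` to `a` that lies on the path from `a` to `b`.
  obtain ⟨m, hm, r, r', rfl, hr⟩ := q.exists_eq_append_first_mem (S := {x | x ∈ p.support})
    p.start_mem_support
  obtain ⟨p₁, p₂, hp₁, hp₂, rfl⟩ := hp.mem_support_iff_exists_append.mp hm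
  refine ⟨m, p₁.reverse, p₂, r.reverse, hp₁.reverse, hp₂, hq.of_append_left.reverse,
    fun x hx₁ hx₂ => ?_, fun x hx₁ hx => ?_, fun x hx₂ hx => ?_⟩
  · by_contra hxm
    exact hp.ne_of_mem_support_of_append hxm (by simpa using hx₁) hx₂ rfl
  · have hx₁ : x ∈ p₁.support := by simpa using hx₁
    exact hr x (by simpa using hx) ((Walk.mem_support_append_iff _ _).mpr (.inl hx₁))
  · exact hr x (by simpa using hx) ((Walk.mem_support_append_iff _ _).mpr (.inr hx₂))

end SimpleGraph

namespace TurnRegular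

section

variable {V : Type*} [Finite V] {G : SimpleGraph V}

lemma two_le_deg_of_adj_of_adj {v x y : V} (hx : G.Adj v x) (hy : G.Adj v y) (hxy : x ≠ y) :
    2 ≤ deg G v :=
  (Set.one_lt_ncard_iff).mpr ⟨x, y, hx, hy, hxy⟩

lemma IsSplitter.two_le_deg {v : V} (h : IsSplitter G v) : 2 ≤ deg G v :=
  le_trans (by omega) (h.trans (Set.ncard_le_ncard fun _ hu => hu.1))

lemma two_le_deg_snd {u v : V} :
    ∀ (p : G.Walk u v), p.IsPath → ¬p.Nil → 2 ≤ deg G v → 2 ≤ deg G p.snd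
  | .nil, _, hnil, _ => absurd .nil hnil
  | .cons _ .nil, _, _, hv => hv
  | .cons h (.cons h' t), hp, _, _ =>
    two_le_deg_of_adj_of_adj h.symm h' fun hu => by simp_all

lemma isSplitter_of_paths {m a b c : V} {pa : G.Walk m a} {pb : G.Walk m b} {pc : G.Walk m c}
    (hpa : pa.IsPath) (hpb : pb.IsPath) (hpc : pc.IsPath)
    (hab : ∀ x ∈ pa.support, x ∈ pb.support → x = m)
    (hac : ∀ x ∈ pa.support, x ∈ pc.support → x = m)
    (hbc : ∀ x ∈ pb.support, x ∈ pc.support → x = m)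
    (ha : 2 ≤ deg G a) (hb : 2 ≤ deg G b) (hc : 2 ≤ deg G c)
    (hma : m ≠ a) (hmb : m ≠ b) (hmc : m ≠ c) : IsSplitter G m := by
  have hna : ¬pa.Nil := Walk.not_nil_of_ne hma
  have hnb : ¬pb.Nil := Walk.not_nil_of_ne hmb
  have hnc : ¬pc.Nil := Walk.not_nil_of_ne hmc
  have hsnd_ne {x y : V} {px : G.Walk m x} {py : G.Walk m y} (hx : ¬px.Nil)
      (hxy : ∀ z ∈ px.support, z ∈ py.support → z = m) : px.snd ≠ py.snd := by
    intro h
    have hm := hxy px.snd (px.getVert_mem_support 1) (h ▸ py.getVert_mem_support 1)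
    exact (Walk.adj_snd hx).ne hm.symm
  refine (Set.two_lt_ncard_iff).mpr ⟨pa.snd, pb.snd, pc.snd,
    ⟨Walk.adj_snd hna, two_le_deg_snd pa hpa hna ha⟩,
    ⟨Walk.adj_snd hnb, two_le_deg_snd pb hpb hnb hb⟩,
    ⟨Walk.adj_snd hnc, two_le_deg_snd pc hpc hnc hc⟩,
    hsnd_ne hna hab, hsnd_ne hna hac, hsnd_ne hnb hbc⟩

end

/-- If a tree `T` contains at least three distinct splitters, then `T` contains
three distinct splitters `x`, `y`, `z` such that `y` lies on the (unique) path
from `x` to `z` in `T`. -/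
theorem stmt10 {V : Type*} [Fintype V] (G : SimpleGraph V)
    (htree : G.IsTree) (hsplit : 3 ≤ {v | IsSplitter G v}.ncard) :
    ∃ x y z, x ≠ y ∧ y ≠ z ∧ x ≠ z ∧
      IsSplitter G x ∧ IsSplitter G y ∧ IsSplitter G z ∧
      ∃ p : G.Walk x z, p.IsPath ∧ y ∈ p.support := by
  obtain ⟨a, b, c, ha, hb, hc, hab, hac, hbc⟩ := (Set.two_lt_ncard_iff).mp hsplit
  obtain ⟨m, pa, pb, pc, hpa, hpb, hpc, hmab, hmac, hmbc⟩ := htree.connected.exists_tripod a b c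
  have through {x y : V} {px : G.Walk m x} {py : G.Walk m y} (hx : px.IsPath) (hy : py.IsPath)
      (hxy : ∀ z ∈ px.support, z ∈ py.support → z = m) :
      ∃ p : G.Walk x y, p.IsPath ∧ m ∈ p.support :=
    ⟨_, hx.reverse_append hy hxy, by simp [Walk.support_append]⟩
  by_cases hma : m = a
  · subst hma
    exact ⟨b, m, c, hab.symm, hac, hbc, hb, ha, hc, through hpb hpc hmbc⟩
  by_cases hmb : m = b
  · subst hmb
    exact ⟨a, m, c, hab, hbc, hac, ha, hb, hc, through hpa hpc hmac⟩
  by_cases hmc : m = c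
  · subst hmc
    exact ⟨a, m, b, hac, fun h => hbc h.symm, hab, ha, hc, hb, through hpa hpb hmab⟩
  exact ⟨a, m, b, Ne.symm hma, hmb, hab, ha,
    isSplitter_of_paths hpa hpb hpc hmab hmac hmbc ha.two_le_deg hb.two_le_deg hc.two_le_deg
      hma hmb hmc, hb, through hpa hpb hmab⟩

end TurnRegular
end
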